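/- Let (M, d) be a metric space and let S = (s_1, ..., s_m) and T = (t_1, ..., t_n) be nonempty finite sequences in M. Then max_{1≤i≤m} min_{1≤j≤n} d(s_i, t_j) ≤ DK(S, T). -/

import Mathlib

open scoped ENNReal

/-- The dog-keeper distance on finite sequences over a metric space; by convention `DK` of an
empty sequence is `∞`. -/
noncomputable def DK {M : Type*} [MetricSpace M] : List M → List M → ℝ≥0∞
  | [], _ => ⊤
  | _ :: _, [] => ⊤
  | [s], [t] => ENNReal.ofReal (dist s t)
  | s :: S, t :: T =>
      min (max (ENNReal.ofReal (dist s t)) (DK S T))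
        (min (max (ENNReal.ofReal (dist s t)) (DK S (t :: T)))
          (max (ENNReal.ofReal (dist s t)) (DK (s :: S) T)))
termination_by S T => S.length + T.length
decreasing_by all_goals (simp <;> omega)

private lemma dk_bdd {M : Type*} [MetricSpace M] (s : M) (l : List M) :
    BddBelow (Set.range fun j : Fin l.length => dist s (l.get j)) :=
  ⟨0, by rintro x ⟨j, rfl⟩; exact dist_nonneg⟩

private lemma dk_inf_cons_le {M : Type*} [MetricSpace M] (s t : M) (T : List M)
    (hT : T ≠ []) :
    (⨅ j : Fin (t :: T).length, dist s ((t :: T).get j)) ≤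
      ⨅ j : Fin T.length, dist s (T.get j) := by
  haveI : Nonempty (Fin T.length) := ⟨⟨0, List.length_pos_iff.mpr hT⟩⟩
  refine le_ciInf fun j => ?_
  have := ciInf_le (dk_bdd s (t :: T)) (j.succ)
  simpa using this

private lemma dk_aux {M : Type*} [MetricSpace M] :
    ∀ n (S T : List M), S.length + T.length ≤ n → T ≠ [] →
      ∀ s ∈ S, ENNReal.ofReal (⨅ j : Fin T.length, dist s (T.get j)) ≤ DK S T := by
  intro n
  induction n with
  | zero =>
    intro S T h hT s hs
    cases T <;> simp_all
  | succ n ih =>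
    intro S T hlen hT s hs
    match S, T with
    | [], _ => cases hs
    | s₁ :: S', [] => exact absurd rfl hT
    | s₁ :: S', t₁ :: T' =>
      have hfirst : (⨅ j : Fin (t₁ :: T').length, dist s ((t₁ :: T').get j)) ≤ dist s t₁ := by
        have := ciInf_le (dk_bdd s (t₁ :: T')) (0 : Fin (T'.length + 1))
        simpa using this
      rcases List.mem_cons.mp hs with rfl | hs'
      · -- s = s₁ : bound by dist s₁ t₁ which appears in every branch
        have hb : ENNReal.ofReal (⨅ j : Fin (t₁ :: T').length, dist s ((t₁ :: T').get j)) ≤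
            ENNReal.ofReal (dist s t₁) := ENNReal.ofReal_le_ofReal hfirst
        match S', T' with
        | [], [] =>
          rw [DK]
          simp only [List.length_cons, List.length_nil]; exact hb
        | [], t₂ :: T'' =>
          rw [DK]
          · exact le_min (hb.trans le_sup_left)
              (le_min (hb.trans le_sup_left) (hb.trans le_sup_left))
          · simp
        | s₂ :: S'', T' =>
          rw [DK]
          · exact le_min (hb.trans le_sup_left)
              (le_min (hb.trans le_sup_left) (hb.trans le_sup_left))
          · simp
      · -- s ∈ S', so S' ≠ []
        obtain ⟨s₂, S'', rfl⟩ : ∃ a l, S' = a :: l := by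
          cases S' with
          | nil => cases hs'
          | cons a l => exact ⟨a, l, rfl⟩
        have hlen1 : (s₂ :: S'').length + (t₁ :: T').length ≤ n := by
          simp at hlen ⊢; omega
        have h2 : ENNReal.ofReal (⨅ j : Fin (t₁ :: T').length, dist s ((t₁ :: T').get j)) ≤
            DK (s₂ :: S'') (t₁ :: T') :=
          ih _ _ hlen1 (by simp) s hs'
        have h1 : ENNReal.ofReal (⨅ j : Fin (t₁ :: T').length, dist s ((t₁ :: T').get j)) ≤
            DK (s₂ :: S'') T' := by
          cases T' with
          | nil => rw [DK]; exact le_top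
          | cons t₂ T'' =>
            refine le_trans (ENNReal.ofReal_le_ofReal (dk_inf_cons_le s t₁ (t₂ :: T'') (by simp)))
              (ih _ _ ?_ (by simp) s hs')
            simp at hlen ⊢; omega
        have h3 : ENNReal.ofReal (⨅ j : Fin (t₁ :: T').length, dist s ((t₁ :: T').get j)) ≤
            DK (s₁ :: s₂ :: S'') T' := by
          cases T' with
          | nil => rw [DK]; exact le_top
          | cons t₂ T'' =>
            refine le_trans (ENNReal.ofReal_le_ofReal (dk_inf_cons_le s t₁ (t₂ :: T'') (by simp)))
              (ih _ _ ?_ (by simp) s (by simp [List.mem_cons.mp hs']))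
            simp at hlen ⊢; omega
        rw [DK]
        · exact le_min (h1.trans le_sup_right)
            (le_min (h2.trans le_sup_right) (h3.trans le_sup_right))
        · simp

/-- `max_i min_j d(s_i, t_j) ≤ DK(S, T)` for nonempty sequences `S`, `T`. -/
theorem statement12
    {M : Type*} [MetricSpace M] (S T : List M) (hS : S ≠ []) (hT : T ≠ []) :
    ENNReal.ofReal
        (⨆ i : Fin S.length, ⨅ j : Fin T.length, dist (S.get i) (T.get j))
      ≤ DK S T := by
  have hS' : 0 < S.length := List.length_pos_iff.mpr hS
  haveI : Nonempty (Fin S.length) := ⟨⟨0, hS'⟩⟩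
  obtain ⟨i₀, hi₀⟩ := Finite.exists_max (fun i : Fin S.length =>
    ⨅ j : Fin T.length, dist (S.get i) (T.get j))
  have hsup : (⨆ i : Fin S.length, ⨅ j : Fin T.length, dist (S.get i) (T.get j)) ≤
      ⨅ j : Fin T.length, dist (S.get i₀) (T.get j) := ciSup_le hi₀
  exact le_trans (ENNReal.ofReal_le_ofReal hsup)
    (dk_aux (S.length + T.length) S T le_rfl hT (S.get i₀) (S.get_mem _))
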